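/- arXiv:cond-mat/0303625 — 3 statements merged into one kernel-verified Lean document; each statement's English description precedes it below -/
import Mathlib

section
/- Let Ω be a set and let A and B be finite partitions of Ω such that every cell of B is contained in some cell of A. Then there exists a partition C of Ω such that A·C = B and such that every partition D of Ω with A·D = B has at least as many cells as C; moreover, the number of cells of any such minimal C equals the maximum over the cells a of A of the number n_a of cells of B contained in a. -/
/-!
A factor `D` with `A·D = B` meets a cell `a` of `A` in each of the `n_a` cells of `B` inside `a`,
and distinct such cells come from distinct cells of `D`; hence `|D| ≥ max n_a`. Conversely,
number the cells of `B` inside each cell `a` by `0, …, n_a - 1` and colour each point of `Ω` by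
the number of its cell: the fibres of this colouring form a factor with at most `max n_a` cells.
-/

/-- A partition of a set `Ω` (here: of the whole type `Ω`): a collection of pairwise
disjoint nonempty subsets whose union is everything. -/
def IsPartition {Ω : Type*} (A : Set (Set Ω)) : Prop :=
  (∀ a ∈ A, a.Nonempty) ∧ (∀ a ∈ A, ∀ b ∈ A, a ≠ b → a ∩ b = ∅) ∧ ⋃₀ A = Set.univ

/-- The product of two partitions: all nonempty sets of the form `a ∩ b`. -/
def partProd {Ω : Type*} (A B : Set (Set Ω)) : Set (Set Ω) :=
  {c | c.Nonempty ∧ ∃ a ∈ A, ∃ b ∈ B, c = a ∩ b}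

/-- `B` refines `A`: every cell of `B` is contained in some cell of `A`. -/
def Refines {Ω : Type*} (B A : Set (Set Ω)) : Prop :=
  ∀ b ∈ B, ∃ a ∈ A, b ⊆ a

open Set

section

variable {Ω β : Type*} {A B D : Set (Set Ω)} {a b : Set Ω} {x : Ω}

def cellOf (A : Set (Set Ω)) (x : Ω) : Set Ω :=
  ⋃₀ {a ∈ A | x ∈ a}

namespace IsPartition

theorem exists_mem (hA : IsPartition A) (x : Ω) : ∃ a ∈ A, x ∈ a :=
  mem_sUnion.mp (hA.2.2 ▸ mem_univ x)

theorem eq_of_mem {a' : Set Ω} (hA : IsPartition A) (ha : a ∈ A) (ha' : a' ∈ A)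
    (hx : x ∈ a) (hx' : x ∈ a') : a = a' := by
  by_contra hne
  exact (hA.2.1 a ha a' ha' hne).subset ⟨hx, hx'⟩

theorem cellOf_eq (hA : IsPartition A) (ha : a ∈ A) (hx : x ∈ a) : cellOf A x = a := by
  refine Subset.antisymm (sUnion_subset fun a' ⟨ha', hxa'⟩ => ?_) (subset_sUnion_of_mem ⟨ha, hx⟩)
  exact (hA.eq_of_mem ha' ha hxa' hx).le

theorem cellOf_mem (hA : IsPartition A) (x : Ω) : cellOf A x ∈ A := by
  obtain ⟨a, ha, hx⟩ := hA.exists_mem x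
  rwa [hA.cellOf_eq ha hx]

theorem mem_cellOf (hA : IsPartition A) (x : Ω) : x ∈ cellOf A x := by
  obtain ⟨a, ha, hx⟩ := hA.exists_mem x
  rwa [hA.cellOf_eq ha hx]

end IsPartition

theorem isPartition_range_preimage_singleton (f : Ω → β) :
    IsPartition (range fun x => f ⁻¹' {f x}) := by
  refine ⟨?_, ?_, eq_univ_of_forall fun x =>
    mem_sUnion_of_mem (show x ∈ f ⁻¹' {f x} from rfl) (mem_range_self x)⟩
  · rintro _ ⟨x, rfl⟩
    exact ⟨x, rfl⟩
  · rintro _ ⟨x, rfl⟩ _ ⟨y, rfl⟩ hne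
    refine eq_empty_of_forall_notMem fun z ⟨hzx, hzy⟩ => hne ?_
    exact congrArg (fun i => f ⁻¹' {i}) ((hzx : f z = f x).symm.trans hzy)

theorem ncard_range_preimage_singleton (f : Ω → β) :
    (range fun x => f ⁻¹' {f x}).ncard = (range f).ncard := by
  change (range ((fun i => f ⁻¹' {i}) ∘ f)).ncard = _
  rw [range_comp]
  refine InjOn.ncard_image ?_
  rintro _ ⟨x, rfl⟩ _ ⟨y, rfl⟩ hxy
  exact (Set.ext_iff.mp hxy x).mp rfl

theorem Refines.subset_of_mem (href : Refines B A) (hA : IsPartition A) (hb : b ∈ B)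
    (ha : a ∈ A) (hxb : x ∈ b) (hxa : x ∈ a) : b ⊆ a := by
  obtain ⟨a', ha', hba'⟩ := href b hb
  rwa [hA.eq_of_mem ha' ha (hba' hxb) hxa] at hba'

theorem Refines.cellOf_subset (href : Refines B A) (hA : IsPartition A) (hB : IsPartition B)
    (ha : a ∈ A) (hx : x ∈ a) : cellOf B x ⊆ a :=
  href.subset_of_mem hA (hB.cellOf_mem x) ha (hB.mem_cellOf x) hx

theorem partProd_range_preimage_singleton (hA : IsPartition A) (hB : IsPartition B)
    (href : Refines B A) {f : Ω → β}
    (hf : ∀ a ∈ A, ∀ b ∈ B, b ⊆ a → ∀ y ∈ b, a ∩ f ⁻¹' {f y} = b) :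
    partProd A (range fun x => f ⁻¹' {f x}) = B := by
  ext c
  constructor
  · rintro ⟨hne, a, ha, _, ⟨x, rfl⟩, rfl⟩
    obtain ⟨y, hya, hyx⟩ := hne
    dsimp only at hyx ⊢
    obtain ⟨b, hb, hyb⟩ := hB.exists_mem y
    rw [← mem_singleton_iff.mp hyx, hf a ha b hb (href.subset_of_mem hA hb ha hyb hya) y hyb]
    exact hb
  · intro hc
    obtain ⟨y, hy⟩ := hB.1 c hc
    obtain ⟨a, ha, hca⟩ := href c hc
    exact ⟨⟨y, hy⟩, a, ha, _, ⟨y, rfl⟩, (hf a ha c hc hca y hy).symm⟩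

theorem Set.Finite.exists_injOn_Iio_ncard {α : Type*} {s : Set α} (hs : s.Finite) :
    ∃ g : α → ℕ, MapsTo g s (Iio s.ncard) ∧ InjOn g s :=
  hs.exists_injOn_of_encard_le (by rw [← (finite_Iio s.ncard).cast_ncard_eq, ncard_Iio_nat,
    hs.cast_ncard_eq])

theorem Refines.exists_coloring_lt (href : Refines B A) (hA : IsPartition A)
    (hB : IsPartition B) (hBfin : B.Finite) {N : ℕ}
    (hN : ∀ a ∈ A, {b ∈ B | b ⊆ a}.ncard ≤ N) :
    ∃ f : Ω → ℕ, (∀ x, f x < N) ∧ ∀ a ∈ A, ∀ b ∈ B, b ⊆ a → ∀ y ∈ b, a ∩ f ⁻¹' {f y} = b := by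
  choose σ hσ_lt hσ_inj using fun a : Set Ω =>
    (hBfin.subset (sep_subset B (· ⊆ a))).exists_injOn_Iio_ncard
  have hcellB : ∀ x, cellOf B x ∈ {b ∈ B | b ⊆ cellOf A x} := fun x =>
    ⟨hB.cellOf_mem x, href.cellOf_subset hA hB (hA.cellOf_mem x) (hA.mem_cellOf x)⟩
  refine ⟨fun x => σ (cellOf A x) (cellOf B x),
    fun x => (hσ_lt _ (hcellB x)).trans_le (hN _ (hA.cellOf_mem x)),
    fun a ha b hb hba y hy => ?_⟩
  have hcellA : ∀ z ∈ a, cellOf A z = a := fun z hz => hA.cellOf_eq ha hz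
  ext z
  simp only [mem_inter_iff, mem_preimage, mem_singleton_iff]
  constructor
  · rintro ⟨hza, hfz⟩
    rw [hcellA z hza, hcellA y (hba hy), hB.cellOf_eq hb hy] at hfz
    have hz : cellOf B z = b :=
      hσ_inj a ⟨hB.cellOf_mem z, href.cellOf_subset hA hB ha hza⟩ ⟨hb, hba⟩ hfz
    exact hz ▸ hB.mem_cellOf z
  · intro hz
    rw [hcellA z (hba hz), hcellA y (hba hy), hB.cellOf_eq hb hz, hB.cellOf_eq hb hy]
    exact ⟨hba hz, rfl⟩

theorem finite_of_partProd_eq (hA : IsPartition A) (hBfin : B.Finite) (hD : partProd A D = B) :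
    D.Finite := by
  -- each cell `d` of `D` is the union of the cells `a ∩ d` of `B` it contains
  refine (hBfin.powerset.image sUnion).subset fun d hd => ⟨{b ∈ B | b ⊆ d}, sep_subset _ _, ?_⟩
  refine Subset.antisymm (sUnion_subset fun b hb => hb.2) fun x hx => ?_
  obtain ⟨a, ha, hxa⟩ := hA.exists_mem x
  exact ⟨a ∩ d, ⟨hD ▸ ⟨⟨x, hxa, hx⟩, a, ha, d, hd, rfl⟩, inter_subset_right⟩, hxa, hx⟩

theorem ncard_sep_subset_le_ncard_of_partProd_eq (hA : IsPartition A) (hBfin : B.Finite)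
    (hD : partProd A D = B) (ha : a ∈ A) : {b ∈ B | b ⊆ a}.ncard ≤ D.ncard := by
  have hDfin := finite_of_partProd_eq hA hBfin hD
  have hsub : {b ∈ B | b ⊆ a} ⊆ (a ∩ ·) '' D := by
    rintro b ⟨hb, hba⟩
    rw [← hD] at hb
    obtain ⟨⟨x, hx⟩, a', ha', d, hd, rfl⟩ := hb
    rw [hA.eq_of_mem ha' ha hx.1 (hba hx)]
    exact mem_image_of_mem _ hd
  exact (ncard_le_ncard hsub (hDfin.image _)).trans (ncard_image_le hDfin)

end

/-- if `B` is a finite refinement of the finite partition `A`, then there is a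
partition `C` with `A·C = B` which has the fewest cells among all such partitions; moreover
the number of cells of any such minimal factor equals `max_{a ∈ A} n_a`, where `n_a` is the
number of cells of `B` contained in `a`. -/
theorem factoring_refinements {Ω : Type*} (A B : Set (Set Ω))
    (hA : IsPartition A) (hB : IsPartition B) (hAfin : A.Finite) (hBfin : B.Finite)
    (href : Refines B A) :
    (∃ C : Set (Set Ω), IsPartition C ∧ partProd A C = B ∧
      ∀ D : Set (Set Ω), IsPartition D → partProd A D = B → C.ncard ≤ D.ncard) ∧
    (∀ C : Set (Set Ω), IsPartition C → partProd A C = B →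
      (∀ D : Set (Set Ω), IsPartition D → partProd A D = B → C.ncard ≤ D.ncard) →
      C.ncard = sSup ((fun a => {b ∈ B | b ⊆ a}.ncard) '' A)) := by
  set N := sSup ((fun a => {b ∈ B | b ⊆ a}.ncard) '' A)
  have le_N : ∀ a ∈ A, {b ∈ B | b ⊆ a}.ncard ≤ N := fun a ha =>
    le_csSup (hAfin.image _).bddAbove (mem_image_of_mem _ ha)
  have N_le : ∀ D, partProd A D = B → N ≤ D.ncard := fun D hD => csSup_le' <|
    forall_mem_image.2 fun a ha => ncard_sep_subset_le_ncard_of_partProd_eq hA hBfin hD ha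
  obtain ⟨f, hf_lt, hf⟩ := href.exists_coloring_lt hA hB hBfin le_N
  have hCpart := isPartition_range_preimage_singleton f
  have hC : partProd A (range fun x => f ⁻¹' {f x}) = B :=
    partProd_range_preimage_singleton hA hB href hf
  have hCN : (range fun x => f ⁻¹' {f x}).ncard ≤ N := by
    rw [ncard_range_preimage_singleton, ← ncard_Iio_nat N]
    exact ncard_le_ncard (range_subset_iff.2 hf_lt) (finite_Iio N)
  refine ⟨⟨_, hCpart, hC, fun D _ hD => hCN.trans (N_le D hD)⟩, fun C' _ hC' hmin => ?_⟩
  exact le_antisymm ((hmin _ hCpart hC).trans hCN) (N_le C' hC')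
end

section
/- Let P : Ω → 𝒫 and F : Ω → ℱ be random variables on a finite probability space (Ω, ℙ), with 𝒫 and ℱ finite, and assume ℙ(P = p) > 0 for every p ∈ 𝒫. Then for every p ∈ 𝒫 and every f ∈ ℱ, the conditional probability of F = f given that P lies in the causal equivalence class of p equals the conditional probability of F = f given P = p; that is, ℙ(F = f | ε(P) = ε(p)) = ℙ(F = f | P = p). -/
open scoped BigOperators
attribute [local instance] Classical.propDecidable

/-- Probability of an event on a finite probability space given by a weight function. -/
noncomputable def prb {Ω : Type*} [Fintype Ω] (μ : Ω → ℝ) (E : Set Ω) : ℝ :=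
  ∑ ω, if ω ∈ E then μ ω else 0

/-- Conditional probability `ℙ(E | F)`. -/
noncomputable def cprob {Ω : Type*} [Fintype Ω] (μ : Ω → ℝ) (E F : Set Ω) : ℝ :=
  prb μ (E ∩ F) / prb μ F

/-- Causal equivalence of pasts: `p ∼ p'` iff they give the same conditional
distribution over futures. -/
def CausalEquiv {Ω Pst Fut : Type*} [Fintype Ω] (μ : Ω → ℝ)
    (P : Ω → Pst) (F : Ω → Fut) (p p' : Pst) : Prop :=
  ∀ f : Fut, cprob μ {ω | F ω = f} {ω | P ω = p} = cprob μ {ω | F ω = f} {ω | P ω = p'}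

/-- Causal equivalence as a setoid on the space of pasts. -/
def causalSetoid {Ω Pst Fut : Type*} [Fintype Ω] (μ : Ω → ℝ)
    (P : Ω → Pst) (F : Ω → Fut) : Setoid Pst where
  r := CausalEquiv μ P F
  iseqv := ⟨fun _ _ => rfl, fun h f => (h f).symm, fun h h' f => (h f).trans (h' f)⟩

/-- The causal state map `ε` sends a past to its causal equivalence class. -/
def causalState {Ω Pst Fut : Type*} [Fintype Ω] (μ : Ω → ℝ)
    (P : Ω → Pst) (F : Ω → Fut) (p : Pst) : Quotient (causalSetoid μ P F) :=
  Quotient.mk (causalSetoid μ P F) p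

/-!
The event `ε(P) = ε(p)` is the disjoint union of the fibres `{P = p'}` over the pasts `p' ∼ p`,
and on each of these fibres `F = f` has the same conditional probability `c`. Since for a
nonnegative weight `ℙ(E ∩ B) = ℙ(E | B) ℙ(B)` holds even when `ℙ(B) = 0`, summing over the fibres
gives `ℙ(F = f, ε(P) = ε(p)) = c ℙ(ε(P) = ε(p))`.
-/

section FiniteProbability

variable {Ω : Type*} [Fintype Ω] {μ : Ω → ℝ}

lemma prb_empty : prb μ ∅ = 0 := by
  simp [prb]

lemma prb_nonneg (hμ : ∀ ω, 0 ≤ μ ω) (E : Set Ω) : 0 ≤ prb μ E :=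
  Finset.sum_nonneg fun ω _ => by split_ifs <;> simp [hμ ω]

lemma prb_mono (hμ : ∀ ω, 0 ≤ μ ω) {E B : Set Ω} (h : E ⊆ B) : prb μ E ≤ prb μ B :=
  Finset.sum_le_sum fun ω _ => by
    by_cases hB : ω ∈ B
    · split_ifs <;> simp [hμ ω]
    · simp [hB, show ω ∉ E from fun hE => hB (h hE)]

lemma prb_inter_eq_cprob_mul (hμ : ∀ ω, 0 ≤ μ ω) (E B : Set Ω) :
    prb μ (E ∩ B) = cprob μ E B * prb μ B := by
  rcases eq_or_ne (prb μ B) 0 with hB | hB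
  · rw [hB, mul_zero]
    exact le_antisymm (hB ▸ prb_mono hμ Set.inter_subset_right) (prb_nonneg hμ _)
  · rw [cprob, div_mul_cancel₀ _ hB]

lemma prb_eq_sum_fiber {β : Type*} (A : Set Ω) (g : Ω → β) :
    prb μ A = ∑ b ∈ Finset.univ.image g, prb μ (A ∩ {ω | g ω = b}) := by
  rw [prb, ← Finset.sum_fiberwise_of_maps_to fun ω _ =>
    Finset.mem_image_of_mem g (Finset.mem_univ ω)]
  refine Finset.sum_congr rfl fun b _ => ?_
  rw [Finset.sum_filter, prb]
  refine Finset.sum_congr rfl fun ω _ => ?_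
  by_cases hω : g ω = b <;> simp [hω]

lemma cprob_preimage_eq_of_cprob_fiber_eq {β : Type*} (hμ : ∀ ω, 0 ≤ μ ω) {E : Set Ω}
    {g : Ω → β} {S : Set β} (hS : S.Nonempty) {c : ℝ}
    (h : ∀ b ∈ S, cprob μ E {ω | g ω = b} = c) :
    cprob μ E (g ⁻¹' S) = c := by
  have hfiber : ∀ b,
      prb μ (E ∩ g ⁻¹' S ∩ {ω | g ω = b}) = c * prb μ (g ⁻¹' S ∩ {ω | g ω = b}) := by
    intro b
    by_cases hb : b ∈ S
    · have hsub : g ⁻¹' S ∩ {ω | g ω = b} = {ω | g ω = b} :=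
        Set.inter_eq_right.mpr fun ω (hω : g ω = b) => show g ω ∈ S from hω ▸ hb
      rw [Set.inter_assoc, hsub, prb_inter_eq_cprob_mul hμ, h b hb]
    · have hempty : g ⁻¹' S ∩ {ω | g ω = b} = ∅ :=
        Set.eq_empty_of_forall_notMem fun ω ⟨hωS, (hω : g ω = b)⟩ => hb (hω ▸ hωS)
      rw [Set.inter_assoc, hempty, Set.inter_empty, prb_empty, mul_zero]
  have hunion : prb μ (E ∩ g ⁻¹' S) = c * prb μ (g ⁻¹' S) := by
    rw [prb_eq_sum_fiber _ g, prb_eq_sum_fiber (g ⁻¹' S) g, Finset.mul_sum]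
    exact Finset.sum_congr rfl fun b _ => hfiber b
  rcases eq_or_ne (prb μ (g ⁻¹' S)) 0 with hnull | hpos
  · obtain ⟨b, hb⟩ := hS
    have hb_null : prb μ {ω | g ω = b} = 0 :=
      le_antisymm (hnull ▸ prb_mono hμ fun ω (hω : g ω = b) => show g ω ∈ S from hω ▸ hb)
        (prb_nonneg hμ _)
    rw [cprob, hnull, div_zero, ← h b hb, cprob, hb_null, div_zero]
  · rw [cprob, hunion, mul_div_cancel_right₀ _ hpos]

end FiniteProbability

theorem condProb_given_causalState_general {Ω Pst Fut : Type*} [Fintype Ω]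
    (μ : Ω → ℝ) (hμ0 : ∀ ω, 0 ≤ μ ω)
    (P : Ω → Pst) (F : Ω → Fut) :
    ∀ (p : Pst) (f : Fut),
      cprob μ {ω | F ω = f}
        {ω | causalState μ P F (P ω) = causalState μ P F p} =
      cprob μ {ω | F ω = f} {ω | P ω = p} := by
  intro p f
  exact cprob_preimage_eq_of_cprob_fiber_eq (g := P)
    (S := {p' | causalState μ P F p' = causalState μ P F p}) hμ0 ⟨p, rfl⟩
    fun p' hp' => Quotient.exact hp' f

/-- conditioning the future on the causal state of a past gives the same
conditional probabilities as conditioning on the past itself: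
`ℙ(F = f | ε(P) = ε(p)) = ℙ(F = f | P = p)`. -/
theorem condProb_given_causalState {Ω Pst Fut : Type*} [Fintype Ω] [Fintype Pst] [Fintype Fut]
    (μ : Ω → ℝ) (hμ0 : ∀ ω, 0 ≤ μ ω) (hμ1 : ∑ ω, μ ω = 1)
    (P : Ω → Pst) (F : Ω → Fut)
    (hP : ∀ p : Pst, 0 < prb μ {ω | P ω = p}) :
    ∀ (p : Pst) (f : Fut),
      cprob μ {ω | F ω = f}
        {ω | causalState μ P F (P ω) = causalState μ P F p} =
      cprob μ {ω | F ω = f} {ω | P ω = p} :=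
  condProb_given_causalState_general μ hμ0 P F
end

section
/- Let P : Ω → 𝒫 and F : Ω → ℱ be random variables on a finite probability space (Ω, ℙ), with 𝒫 and ℱ finite, and assume ℙ(P = p) > 0 for every p ∈ 𝒫. Then the causal states are prescient: the mutual information between the future and the causal state equals the mutual information between the future and the past, I[F; ε∘P] = I[F; P]. -/
open scoped BigOperators
attribute [local instance] Classical.propDecidable

/-- The distribution of a random variable `X`. -/
noncomputable def pdist {Ω α : Type*} [Fintype Ω] (μ : Ω → ℝ) (X : Ω → α) (x : α) : ℝ :=
  prb μ {ω | X ω = x}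

/-- Shannon entropy `H[X]` (in nats; `Real.log 0 = 0` gives the convention `0·log 0 = 0`). -/
noncomputable def Hent {Ω α : Type*} [Fintype Ω] [Fintype α] (μ : Ω → ℝ) (X : Ω → α) : ℝ :=
  -∑ x, pdist μ X x * Real.log (pdist μ X x)

/-- Mutual information `I[X;Y] = H[X] + H[Y] - H[X,Y]`. -/
noncomputable def Iinfo {Ω α β : Type*} [Fintype Ω] [Fintype α] [Fintype β]
    (μ : Ω → ℝ) (X : Ω → α) (Y : Ω → β) : ℝ :=
  Hent μ X + Hent μ Y - Hent μ (fun ω => (X ω, Y ω))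

/-- Conditional entropy `H[X|Y] = H[X,Y] - H[Y]`. -/
noncomputable def condH {Ω α β : Type*} [Fintype Ω] [Fintype α] [Fintype β]
    (μ : Ω → ℝ) (X : Ω → α) (Y : Ω → β) : ℝ :=
  Hent μ (fun ω => (X ω, Y ω)) - Hent μ Y

/-!
Given the past, the future has conditional law `κ (ε P)`, which depends on the past only through
its causal state. The joint law of `(F, ε ∘ P)` therefore factors through the same kernel `κ`, so
`H[F | P]` and `H[F | ε ∘ P]` both equal the average of the entropy of `κ s` over the law of the
causal state `s`, and `I[F; ·] = H[F] - H[F | ·]` agrees for both.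
-/

open Finset Real

section FiniteEntropy

variable {Ω α β γ : Type*} [Fintype Ω] (μ : Ω → ℝ)

lemma pdist_comp [Fintype α] (X : Ω → α) (g : α → β) (b : β) :
    pdist μ (fun ω => g (X ω)) b = ∑ a, if g a = b then pdist μ X a else 0 := by
  simp only [pdist, prb, Set.mem_ofPred_eq]
  conv_rhs => enter [2, a]; rw [← boole_mul, mul_sum]
  rw [sum_comm]
  simp

lemma pdist_prodMk_comp_right [Fintype α] [Fintype β] (X : Ω → α) (Y : Ω → β) (g : β → γ)
    (a : α) (c : γ) :
    pdist μ (fun ω => (X ω, g (Y ω))) (a, c)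
      = ∑ b, if g b = c then pdist μ (fun ω => (X ω, Y ω)) (a, b) else 0 := by
  change pdist μ (fun ω => Prod.map id g (X ω, Y ω)) (a, c) = _
  rw [pdist_comp, Fintype.sum_prod_type]
  simp [Prod.ext_iff, ite_and]

lemma sum_pdist_prodMk_left [Fintype α] [Fintype β] (X : Ω → α) (Y : Ω → β) (b : β) :
    ∑ a, pdist μ (fun ω => (X ω, Y ω)) (a, b) = pdist μ Y b := by
  change _ = pdist μ (fun ω => (X ω, Y ω).2) b
  rw [pdist_comp, Fintype.sum_prod_type]
  simp

lemma sum_pdist_comp_mul [Fintype α] [Fintype β] (X : Ω → α) (g : α → β) (h : β → ℝ) :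
    ∑ b, pdist μ (fun ω => g (X ω)) b * h b = ∑ a, pdist μ X a * h (g a) := by
  simp only [pdist_comp, sum_mul, ite_mul, zero_mul]
  rw [sum_comm]
  simp

lemma pdist_prodMk_eq_cprob_mul (X : Ω → α) (Y : Ω → β) (a : α) (b : β)
    (hb : prb μ {ω | Y ω = b} ≠ 0) :
    pdist μ (fun ω => (X ω, Y ω)) (a, b)
      = cprob μ {ω | X ω = a} {ω | Y ω = b} * pdist μ Y b := by
  rw [cprob, pdist, pdist, div_mul_cancel₀ _ hb]
  congr 1
  ext ω
  simp [Prod.ext_iff]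

lemma sum_cprob_eq_one [Fintype α] [Fintype β] (X : Ω → α) (Y : Ω → β) (b : β)
    (hb : prb μ {ω | Y ω = b} ≠ 0) :
    ∑ a, cprob μ {ω | X ω = a} {ω | Y ω = b} = 1 := by
  have hb' : pdist μ Y b ≠ 0 := hb
  rw [← mul_left_inj' hb', one_mul, sum_mul]
  simp_rw [← pdist_prodMk_eq_cprob_mul μ X Y _ b hb]
  exact sum_pdist_prodMk_left μ X Y b

lemma Hent_eq_sum_negMulLog [Fintype α] (X : Ω → α) :
    Hent μ X = ∑ a, negMulLog (pdist μ X a) := by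
  simp [Hent, negMulLog, sum_neg_distrib]

lemma Iinfo_eq_sub_condH [Fintype α] [Fintype β] (X : Ω → α) (Y : Ω → β) :
    Iinfo μ X Y = Hent μ X - condH μ X Y := by
  rw [Iinfo, condH]
  ring

lemma condH_eq_sum_of_factor [Fintype α] [Fintype β] (X : Ω → α) (Y : Ω → β) (κ : β → α → ℝ)
    (hfac : ∀ a b, pdist μ (fun ω => (X ω, Y ω)) (a, b) = κ b a * pdist μ Y b)
    (hκ : ∀ b, ∑ a, κ b a = 1) :
    condH μ X Y = ∑ b, pdist μ Y b * ∑ a, negMulLog (κ b a) := by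
  rw [condH, Hent_eq_sum_negMulLog, Hent_eq_sum_negMulLog, Fintype.sum_prod_type, sum_comm]
  simp only [hfac, negMulLog_mul, sum_add_distrib, ← sum_mul, hκ, one_mul, mul_sum]
  ring

lemma pdist_prodMk_comp_eq_mul_of_factor [Fintype α] [Fintype β] (X : Ω → α) (Y : Ω → β)
    (g : β → γ) (κ : γ → α → ℝ)
    (hfac : ∀ a b, pdist μ (fun ω => (X ω, Y ω)) (a, b) = κ (g b) a * pdist μ Y b)
    (a : α) (c : γ) :
    pdist μ (fun ω => (X ω, g (Y ω))) (a, c) = κ c a * pdist μ (fun ω => g (Y ω)) c := by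
  rw [pdist_prodMk_comp_right, pdist_comp, mul_sum]
  refine sum_congr rfl fun b _ => ?_
  split_ifs with hb
  · rw [hfac, hb]
  · rw [mul_zero]

end FiniteEntropy

theorem causal_states_prescient_general {Ω Pst Fut : Type*} [Fintype Ω] [Fintype Pst] [Fintype Fut]
    (μ : Ω → ℝ)
    (P : Ω → Pst) (F : Ω → Fut)
    (hP : ∀ p : Pst, 0 < prb μ {ω | P ω = p}) :
    Iinfo μ F (fun ω => causalState μ P F (P ω)) = Iinfo μ F P := by
  set ε := causalState μ P F
  let κ : Quotient (causalSetoid μ P F) → Fut → ℝ :=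
    fun s f => cprob μ {ω | F ω = f} {ω | P ω = s.out}
  have hκε : ∀ p f, κ (ε p) f = cprob μ {ω | F ω = f} {ω | P ω = p} := fun p =>
    Quotient.exact (Quotient.out_eq (ε p))
  have hκ : ∀ s, ∑ f, κ s f = 1 := fun s => sum_cprob_eq_one μ F P _ (hP _).ne'
  have hfac : ∀ f p, pdist μ (fun ω => (F ω, P ω)) (f, p) = κ (ε p) f * pdist μ P p := by
    intro f p
    rw [hκε]
    exact pdist_prodMk_eq_cprob_mul μ F P f p (hP p).ne'
  rw [Iinfo_eq_sub_condH, Iinfo_eq_sub_condH,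
    condH_eq_sum_of_factor μ F _ κ (pdist_prodMk_comp_eq_mul_of_factor μ F P ε κ hfac) hκ,
    condH_eq_sum_of_factor μ F P (fun p => κ (ε p)) hfac (fun p => hκ _), sum_pdist_comp_mul]

/-- the causal states are prescient: `I[F; ε∘P] = I[F; P]`. -/
theorem causal_states_prescient {Ω Pst Fut : Type*} [Fintype Ω] [Fintype Pst] [Fintype Fut]
    (μ : Ω → ℝ) (hμ0 : ∀ ω, 0 ≤ μ ω) (hμ1 : ∑ ω, μ ω = 1)
    (P : Ω → Pst) (F : Ω → Fut)
    (hP : ∀ p : Pst, 0 < prb μ {ω | P ω = p}) :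
    Iinfo μ F (fun ω => causalState μ P F (P ω)) = Iinfo μ F P :=
  causal_states_prescient_general μ P F hP
end
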